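/- Let d be a positive integer with d ≡ 3 (mod 4), and write d = d₀f² with d₀ squarefree (so f is odd). Then r₂₄(d) = (1/2) · Σ_{c ∣ f} Σ_{c′ ∣ f, gcd(c,c′)=1} r₃,prim(d/c²) · r₃,prim(d/c′²). -/

import Mathlib

/-- `r₂₄(n)`: half the number of vectors `(a,b,c,d,e,f) ∈ ℤ⁶` with
`gcd(a,b,c,d,e,f) = 1`, `af − be + cd = 0` and `a²+b²+c²+d²+e²+f² = n`. -/
noncomputable def r24 (n : ℕ) : ℚ :=
  (Nat.card {w : Fin 6 → ℤ //
    Finset.univ.gcd w = 1 ∧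
    w 0 * w 5 - w 1 * w 4 + w 2 * w 3 = 0 ∧
    (w 0) ^ 2 + (w 1) ^ 2 + (w 2) ^ 2 + (w 3) ^ 2 + (w 4) ^ 2 + (w 5) ^ 2 = (n : ℤ)} : ℚ) / 2

/-- `r₃,prim(n)`: the number of triples `(x,y,z) ∈ ℤ³` with `x²+y²+z² = n`
and `gcd(x,y,z) = 1`. -/
noncomputable def r3prim (n : ℕ) : ℕ :=
  Nat.card {v : Fin 3 → ℤ //
    (v 0) ^ 2 + (v 1) ^ 2 + (v 2) ^ 2 = (n : ℤ) ∧ Finset.univ.gcd v = 1}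


-- helper: finiteness of sphere-like subtypes
lemma finite_sphere3 (n : ℤ) (P : (Fin 3 → ℤ) → Prop) :
    Finite {v : Fin 3 → ℤ // ((v 0)^2 + (v 1)^2 + (v 2)^2 = n) ∧ P v} := by
  have key : ∀ (v : Fin 3 → ℤ), ((v 0)^2 + (v 1)^2 + (v 2)^2 = n) → ∀ i, v i ∈ Finset.Icc (-n) n := by
    intro v hv i
    have hsum : ∑ j, (v j)^2 = n := by rw [Fin.sum_univ_three]; exact hv
    have h1 : (v i)^2 ≤ n := hsum ▸ Finset.single_le_sum (fun j _ => sq_nonneg (v j)) (Finset.mem_univ i)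
    have h2 : |v i| ≤ n := by nlinarith [abs_nonneg (v i), sq_abs (v i)]
    rw [Finset.mem_Icc]
    constructor <;> [linarith [neg_abs_le (v i)]; linarith [le_abs_self (v i)]]
  apply Finite.of_injective (fun (v : {v : Fin 3 → ℤ // ((v 0)^2 + (v 1)^2 + (v 2)^2 = n) ∧ P v})
    (i : Fin 3) => (⟨v.1 i, key v.1 v.2.1 i⟩ : (Finset.Icc (-n) n : Finset ℤ)))
  intro v w h
  ext i
  exact congrArg Subtype.val (congrFun h i)

-- helper : Nat.card of sigma
lemma nat_card_sigma {ι : Type*} [Fintype ι] (F : ι → Type*) [∀ i, Finite (F i)] :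
    Nat.card (Σ i, F i) = ∑ i, Nat.card (F i) := by
  classical
  have : ∀ i, Fintype (F i) := fun i => Fintype.ofFinite _
  simp [Nat.card_eq_fintype_card, Fintype.card_sigma]

lemma finset_gcd_nonneg {n : ℕ} (v : Fin n → ℤ) : 0 ≤ Finset.univ.gcd v :=
  Int.nonneg_of_normalize_eq_self (Finset.normalize_gcd)

lemma gcd_eq_one_of_forall {n : ℕ} (v : Fin n → ℤ)
    (h : ∀ z : ℤ, (∀ i, z ∣ v i) → z ∣ 1) : Finset.univ.gcd v = 1 := by
  have h1 : Finset.univ.gcd v ∣ 1 := h _ (fun i => Finset.gcd_dvd (Finset.mem_univ i))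
  have h2 := finset_gcd_nonneg v
  rcases Int.isUnit_iff.1 (isUnit_of_dvd_one h1) with h | h <;> omega

lemma gcd_mul_nat {n : ℕ} (c : ℕ) (v : Fin n → ℤ) :
    Finset.univ.gcd (fun i => (c:ℤ) * v i) = (c : ℤ) * Finset.univ.gcd v := by
  rw [Finset.gcd_mul_left, Int.normalize_coe_nat]

lemma dvd_of_sq_dvd_sqfree_mul_sq {d₀ f c : ℕ} (hsq : Squarefree d₀) (hf : f ≠ 0)
    (h : c^2 ∣ d₀ * f^2) : c ∣ f := by
  have hd₀ : d₀ ≠ 0 := hsq.ne_zero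
  have hne : d₀ * f^2 ≠ 0 := mul_ne_zero hd₀ (pow_ne_zero _ hf)
  have hc : c ≠ 0 := by rintro rfl; exact hne (by simpa using h)
  rw [← Nat.factorization_le_iff_dvd hc hf, Finsupp.le_def]
  intro p
  have hle := (Nat.factorization_le_iff_dvd (pow_ne_zero 2 hc) hne).2 h
  have h1 := hle p
  rw [Nat.factorization_pow, Nat.factorization_mul hd₀ (pow_ne_zero _ hf),
    Nat.factorization_pow] at h1
  have h2 : d₀.factorization p ≤ 1 := hsq.natFactorization_le_one p
  simp only [Finsupp.smul_apply, Finsupp.add_apply, smul_eq_mul] at h1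
  omega

def Tset (d : ℕ) := {p : (Fin 3 → ℤ) × (Fin 3 → ℤ) //
  ((p.1 0)^2 + (p.1 1)^2 + (p.1 2)^2 = (d:ℤ)) ∧
  ((p.2 0)^2 + (p.2 1)^2 + (p.2 2)^2 = (d:ℤ)) ∧
  Int.gcd (Finset.univ.gcd p.1) (Finset.univ.gcd p.2) = 1}

lemma phi_cond (d : ℕ) (h3 : d % 4 = 3) (w : Fin 6 → ℤ)
    (hg : Finset.univ.gcd w = 1)
    (hq : w 0 * w 5 - w 1 * w 4 + w 2 * w 3 = 0)
    (hs : (w 0)^2 + (w 1)^2 + (w 2)^2 + (w 3)^2 + (w 4)^2 + (w 5)^2 = (d:ℤ)) :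
    ((w 0 + w 5)^2 + (w 1 - w 4)^2 + (w 2 + w 3)^2 = (d:ℤ)) ∧
    ((w 0 - w 5)^2 + (w 1 + w 4)^2 + (w 2 - w 3)^2 = (d:ℤ)) ∧
    Int.gcd (Finset.univ.gcd ![w 0 + w 5, w 1 - w 4, w 2 + w 3])
            (Finset.univ.gcd ![w 0 - w 5, w 1 + w 4, w 2 - w 3]) = 1 := by
  have h1 : (w 0 + w 5)^2 + (w 1 - w 4)^2 + (w 2 + w 3)^2 = (d:ℤ) := by
    linear_combination hs + 2*hq
  have h2 : (w 0 - w 5)^2 + (w 1 + w 4)^2 + (w 2 - w 3)^2 = (d:ℤ) := by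
    linear_combination hs - 2*hq
  refine ⟨h1, h2, ?_⟩
  set x : Fin 3 → ℤ := ![w 0 + w 5, w 1 - w 4, w 2 + w 3] with hxdef
  set y : Fin 3 → ℤ := ![w 0 - w 5, w 1 + w 4, w 2 - w 3] with hydef
  set g : ℕ := Int.gcd (Finset.univ.gcd x) (Finset.univ.gcd y) with hgdef
  have hdx : ∀ i, (g:ℤ) ∣ x i := fun i =>
    dvd_trans (Int.gcd_dvd_left _ _) (Finset.gcd_dvd (Finset.mem_univ i))
  have hdy : ∀ i, (g:ℤ) ∣ y i := fun i =>
    dvd_trans (Int.gcd_dvd_right _ _) (Finset.gcd_dvd (Finset.mem_univ i))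
  have hx0 : (g:ℤ) ∣ w 0 + w 5 := hdx 0
  have hx1 : (g:ℤ) ∣ w 1 - w 4 := hdx 1
  have hx2 : (g:ℤ) ∣ w 2 + w 3 := hdx 2
  have hy0 : (g:ℤ) ∣ w 0 - w 5 := hdy 0
  have hy1 : (g:ℤ) ∣ w 1 + w 4 := hdy 1
  have hy2 : (g:ℤ) ∣ w 2 - w 3 := hdy 2
  -- g is odd
  have hsqdvd : ((g^2 : ℕ) : ℤ) ∣ (d : ℤ) := by
    push_cast
    have := dvd_add (dvd_add (mul_dvd_mul hx0 hx0) (mul_dvd_mul hx1 hx1))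
      (mul_dvd_mul hx2 hx2)
    have e : (w 0 + w 5) * (w 0 + w 5) + (w 1 - w 4) * (w 1 - w 4) +
        (w 2 + w 3) * (w 2 + w 3) = (d:ℤ) := by linear_combination h1
    rw [e] at this
    exact (by ring_nf : (g:ℤ)^2 = (g:ℤ)*(g:ℤ)) ▸ this
  have hgd : g^2 ∣ d := Int.natCast_dvd_natCast.1 hsqdvd
  have hgodd : g % 2 = 1 := by
    rcases Nat.even_or_odd g with he | ho
    · exfalso
      obtain ⟨m, hm⟩ := he
      obtain ⟨k, hk⟩ := hgd
      have : d = 4 * (m^2 * k) := by rw [hk, hm]; ring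
      omega
    · obtain ⟨m, hm⟩ := ho; omega
  -- g divides every w i
  have hcop : IsCoprime ((2:ℤ)) (g:ℤ) := by
    rw [Int.isCoprime_iff_gcd_eq_one]
    have : Nat.gcd 2 g = 1 := (Nat.Prime.coprime_iff_not_dvd Nat.prime_two).2 (by omega)
    simpa [Int.gcd] using this
  have key : ∀ i : Fin 6, (g:ℤ) ∣ w i := by
    have d0 : (g:ℤ) ∣ 2 * w 0 := by
      have h := dvd_add hx0 hy0
      have e : (w 0 + w 5) + (w 0 - w 5) = 2 * w 0 := by ring
      rwa [e] at h
    have d5 : (g:ℤ) ∣ 2 * w 5 := by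
      have h := dvd_sub hx0 hy0
      have e : (w 0 + w 5) - (w 0 - w 5) = 2 * w 5 := by ring
      rwa [e] at h
    have d1 : (g:ℤ) ∣ 2 * w 1 := by
      have h := dvd_add hx1 hy1
      have e : (w 1 - w 4) + (w 1 + w 4) = 2 * w 1 := by ring
      rwa [e] at h
    have d4 : (g:ℤ) ∣ 2 * w 4 := by
      have h := dvd_sub hy1 hx1
      have e : (w 1 + w 4) - (w 1 - w 4) = 2 * w 4 := by ring
      rwa [e] at h
    have d2 : (g:ℤ) ∣ 2 * w 2 := by
      have h := dvd_add hx2 hy2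
      have e : (w 2 + w 3) + (w 2 - w 3) = 2 * w 2 := by ring
      rwa [e] at h
    have d3 : (g:ℤ) ∣ 2 * w 3 := by
      have h := dvd_sub hx2 hy2
      have e : (w 2 + w 3) - (w 2 - w 3) = 2 * w 3 := by ring
      rwa [e] at h
    intro i
    fin_cases i
    · exact hcop.symm.dvd_of_dvd_mul_left d0
    · exact hcop.symm.dvd_of_dvd_mul_left d1
    · exact hcop.symm.dvd_of_dvd_mul_left d2
    · exact hcop.symm.dvd_of_dvd_mul_left d3
    · exact hcop.symm.dvd_of_dvd_mul_left d4
    · exact hcop.symm.dvd_of_dvd_mul_left d5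
  have : (g:ℤ) ∣ Finset.univ.gcd w := Finset.dvd_gcd (fun i _ => key i)
  rw [hg] at this
  have : g ∣ 1 := by exact_mod_cast this
  simpa using this

lemma all_odd (d : ℕ) (h3 : d % 4 = 3) (x : Fin 3 → ℤ)
    (hx : (x 0)^2 + (x 1)^2 + (x 2)^2 = (d:ℤ)) : ∀ i, x i % 2 = 1 := by
  have h4 : ((x 0 : ZMod 4))^2 + ((x 1 : ZMod 4))^2 + ((x 2 : ZMod 4))^2 = 3 := by
    have := congrArg (Int.cast : ℤ → ZMod 4) hx
    push_cast at this
    rw [this]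
    rw [show ((d : ZMod 4)) = ((d % 4 : ℕ) : ZMod 4) from (ZMod.natCast_mod d 4).symm, h3]
    norm_num
  have key : ∀ a b c : ZMod 4, a^2+b^2+c^2 = 3 →
      (a = 1 ∨ a = 3) ∧ (b = 1 ∨ b = 3) ∧ (c = 1 ∨ c = 3) := by decide
  have hodd : ∀ i : Fin 3, ¬ (2:ℤ) ∣ x i := by
    have h := key _ _ _ h4
    intro i hdvd
    obtain ⟨k, hk⟩ := hdvd
    have h2 : ∀ m : ZMod 4, 2 * m ≠ 1 ∧ 2 * m ≠ 3 := by decide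
    have hcast : ((x i : ZMod 4)) = 2 * (k : ZMod 4) := by rw [hk]; push_cast; ring
    fin_cases i
    · rcases h.1 with h' | h' <;> [exact (h2 (k:ZMod 4)).1 (by rw [← hcast]; exact h');
        exact (h2 (k:ZMod 4)).2 (by rw [← hcast]; exact h')]
    · rcases h.2.1 with h' | h' <;> [exact (h2 (k:ZMod 4)).1 (by rw [← hcast]; exact h');
        exact (h2 (k:ZMod 4)).2 (by rw [← hcast]; exact h')]
    · rcases h.2.2 with h' | h' <;> [exact (h2 (k:ZMod 4)).1 (by rw [← hcast]; exact h');
        exact (h2 (k:ZMod 4)).2 (by rw [← hcast]; exact h')]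
  intro i
  have := hodd i
  omega

lemma card_S_eq_card_T (d : ℕ) (h3 : d % 4 = 3) :
    Nat.card {w : Fin 6 → ℤ //
      Finset.univ.gcd w = 1 ∧
      w 0 * w 5 - w 1 * w 4 + w 2 * w 3 = 0 ∧
      (w 0) ^ 2 + (w 1) ^ 2 + (w 2) ^ 2 + (w 3) ^ 2 + (w 4) ^ 2 + (w 5) ^ 2 = (d : ℤ)}
    = Nat.card (Tset d) := by
  apply Nat.card_eq_of_bijective (fun p =>
    (⟨(![p.1 0 + p.1 5, p.1 1 - p.1 4, p.1 2 + p.1 3],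
       ![p.1 0 - p.1 5, p.1 1 + p.1 4, p.1 2 - p.1 3]),
      phi_cond d h3 p.1 p.2.1 p.2.2.1 p.2.2.2⟩ : Tset d))
  constructor
  · rintro ⟨w, hw⟩ ⟨w', hw'⟩ h
    have hval := congrArg Subtype.val h
    have h1 := congrArg Prod.fst hval
    have h2 := congrArg Prod.snd hval
    have e0 := congrFun h1 0
    have e1 := congrFun h1 1
    have e2 := congrFun h1 2
    have f0 := congrFun h2 0
    have f1 := congrFun h2 1
    have f2 := congrFun h2 2
    simp only [Matrix.cons_val_zero, Matrix.cons_val_one, Matrix.head_cons] at e0 e1 e2 f0 f1 f2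
    apply Subtype.ext
    funext i
    fin_cases i <;> simp_all <;> omega
  · rintro ⟨⟨x, y⟩, hx, hy, hcop⟩
    dsimp only at hx hy hcop
    have hox := all_odd d h3 x hx
    have hoy := all_odd d h3 y hy
    obtain ⟨a, ha⟩ : ∃ a, x 0 + y 0 = 2 * a := ⟨(x 0 + y 0)/2, by have := hox 0; have := hoy 0; omega⟩
    obtain ⟨f', hf⟩ : ∃ a, x 0 - y 0 = 2 * a := ⟨(x 0 - y 0)/2, by have := hox 0; have := hoy 0; omega⟩
    obtain ⟨b, hb⟩ : ∃ a, x 1 + y 1 = 2 * a := ⟨(x 1 + y 1)/2, by have := hox 1; have := hoy 1; omega⟩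
    obtain ⟨e', he⟩ : ∃ a, y 1 - x 1 = 2 * a := ⟨(y 1 - x 1)/2, by have := hox 1; have := hoy 1; omega⟩
    obtain ⟨c, hc⟩ : ∃ a, x 2 + y 2 = 2 * a := ⟨(x 2 + y 2)/2, by have := hox 2; have := hoy 2; omega⟩
    obtain ⟨d', hd'⟩ : ∃ a, x 2 - y 2 = 2 * a := ⟨(x 2 - y 2)/2, by have := hox 2; have := hoy 2; omega⟩
    have hx0 : x 0 = a + f' := by omega
    have hy0 : y 0 = a - f' := by omega
    have hx1 : x 1 = b - e' := by omega
    have hy1 : y 1 = b + e' := by omega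
    have hx2 : x 2 = c + d' := by omega
    have hy2 : y 2 = c - d' := by omega
    rw [hx0, hx1, hx2] at hx
    rw [hy0, hy1, hy2] at hy
    set w : Fin 6 → ℤ := ![a, b, c, d', e', f'] with hwdef
    have hq : w 0 * w 5 - w 1 * w 4 + w 2 * w 3 = 0 := by
      show a * f' - b * e' + c * d' = 0
      have h4 : (4:ℤ) * (a * f' - b * e' + c * d') = 0 := by linear_combination hx - hy
      linarith
    have hs : (w 0)^2 + (w 1)^2 + (w 2)^2 + (w 3)^2 + (w 4)^2 + (w 5)^2 = (d:ℤ) := by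
      show a^2 + b^2 + c^2 + d'^2 + e'^2 + f'^2 = (d:ℤ)
      have h2 : (2:ℤ) * (a^2 + b^2 + c^2 + d'^2 + e'^2 + f'^2) = 2 * d := by
        linear_combination hx + hy
      linarith
    have hgw : Finset.univ.gcd w = 1 := by
      apply gcd_eq_one_of_forall
      intro z hz
      have za : z ∣ a := hz 0
      have zb : z ∣ b := hz 1
      have zc : z ∣ c := hz 2
      have zd : z ∣ d' := hz 3
      have ze : z ∣ e' := hz 4
      have zf : z ∣ f' := hz 5
      have zdx : ∀ i, z ∣ x i := by
        intro i; fin_cases i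
        · show z ∣ x 0; rw [hx0]; exact dvd_add za zf
        · show z ∣ x 1; rw [hx1]; exact dvd_sub zb ze
        · show z ∣ x 2; rw [hx2]; exact dvd_add zc zd
      have zdy : ∀ i, z ∣ y i := by
        intro i; fin_cases i
        · show z ∣ y 0; rw [hy0]; exact dvd_sub za zf
        · show z ∣ y 1; rw [hy1]; exact dvd_add zb ze
        · show z ∣ y 2; rw [hy2]; exact dvd_sub zc zd
      have h1 : z ∣ Finset.univ.gcd x := Finset.dvd_gcd (fun i _ => zdx i)
      have h2 : z ∣ Finset.univ.gcd y := Finset.dvd_gcd (fun i _ => zdy i)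
      have := Int.dvd_coe_gcd h1 h2
      rwa [hcop] at this
    refine ⟨⟨w, hgw, hq, hs⟩, ?_⟩
    apply Subtype.ext
    show (![w 0 + w 5, w 1 - w 4, w 2 + w 3], ![w 0 - w 5, w 1 + w 4, w 2 - w 3]) = (x, y)
    have hw0 : w 0 = a := rfl
    have hw1 : w 1 = b := rfl
    have hw2 : w 2 = c := rfl
    have hw3 : w 3 = d' := rfl
    have hw4 : w 4 = e' := rfl
    have hw5 : w 5 = f' := rfl
    refine Prod.ext ?_ ?_ <;> funext i <;> fin_cases i <;> simp <;> omega

section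
variable (d f : ℕ)

def idxSet : Finset (ℕ × ℕ) :=
  (f.divisors ×ˢ f.divisors).filter (fun p => Nat.gcd p.1 p.2 = 1)

def R3 (n : ℕ) := {v : Fin 3 → ℤ //
    (v 0) ^ 2 + (v 1) ^ 2 + (v 2) ^ 2 = (n : ℤ) ∧ Finset.univ.gcd v = 1}

lemma r3prim_eq (n : ℕ) : r3prim n = Nat.card (R3 n) := rfl

end

lemma psi_cond (d f : ℕ) (hf2 : f^2 ∣ d) {c c' : ℕ} (hc : c ∣ f) (hc' : c' ∣ f)
    (hcc' : Nat.gcd c c' = 1)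
    (u : R3 (d / c^2)) (v : R3 (d / c'^2)) :
    (((c:ℤ) * u.1 0)^2 + ((c:ℤ) * u.1 1)^2 + ((c:ℤ) * u.1 2)^2 = (d:ℤ)) ∧
    (((c':ℤ) * v.1 0)^2 + ((c':ℤ) * v.1 1)^2 + ((c':ℤ) * v.1 2)^2 = (d:ℤ)) ∧
    Int.gcd (Finset.univ.gcd (fun i => (c:ℤ) * u.1 i))
            (Finset.univ.gcd (fun i => (c':ℤ) * v.1 i)) = 1 := by
  have hc2 : c^2 ∣ d := (pow_dvd_pow_of_dvd hc 2).trans hf2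
  have hc'2 : c'^2 ∣ d := (pow_dvd_pow_of_dvd hc' 2).trans hf2
  have cast1 : ((d / c^2 : ℕ) : ℤ) * (c:ℤ)^2 = (d:ℤ) := by
    exact_mod_cast congrArg (fun t : ℕ => (t:ℤ)) (Nat.div_mul_cancel hc2)
  have cast2 : ((d / c'^2 : ℕ) : ℤ) * (c':ℤ)^2 = (d:ℤ) := by
    exact_mod_cast congrArg (fun t : ℕ => (t:ℤ)) (Nat.div_mul_cancel hc'2)
  refine ⟨?_, ?_, ?_⟩
  · have h := u.2.1; linear_combination ((c:ℤ))^2 * h + cast1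
  · have h := v.2.1; linear_combination ((c':ℤ))^2 * h + cast2
  · rw [gcd_mul_nat, gcd_mul_nat, u.2.2, v.2.2, mul_one, mul_one]
    exact_mod_cast hcc'

set_option maxHeartbeats 1000000 in
lemma card_T (d d₀ f : ℕ) (hd : 0 < d) (hfact : d = d₀ * f^2) (hsq : Squarefree d₀) :
    Nat.card (Tset d) =
      ∑ p ∈ idxSet f, r3prim (d / p.1^2) * r3prim (d / p.2^2) := by
  classical
  have hf : f ≠ 0 := by rintro rfl; simp at hfact; omega
  have hf2 : f^2 ∣ d := ⟨d₀, by rw [hfact]; ring⟩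
  have hmemd : ∀ {p : ℕ × ℕ}, p ∈ idxSet f → p.1 ∣ f ∧ p.2 ∣ f ∧ Nat.gcd p.1 p.2 = 1 := by
    intro p hp
    simp only [idxSet, Finset.mem_filter, Finset.mem_product, Nat.mem_divisors] at hp
    exact ⟨hp.1.1.1, hp.1.2.1, hp.2⟩
  -- the sigma type
  have main : Nat.card (Tset d) =
      Nat.card (Σ p : {p : ℕ × ℕ // p ∈ idxSet f}, R3 (d / p.1.1^2) × R3 (d / p.1.2^2)) := by
    symm
    apply Nat.card_eq_of_bijective (fun q =>
      (⟨((fun i => (q.1.1.1 : ℤ) * q.2.1.1 i), (fun i => (q.1.1.2 : ℤ) * q.2.2.1 i)),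
        psi_cond d f hf2 (hmemd q.1.2).1 (hmemd q.1.2).2.1 (hmemd q.1.2).2.2 q.2.1 q.2.2⟩ : Tset d))
    constructor
    · rintro ⟨⟨⟨c, c'⟩, hmem⟩, ⟨u, v⟩⟩ ⟨⟨⟨e, e'⟩, hmem'⟩, ⟨s, t⟩⟩ heq
      have hval := congrArg Subtype.val heq
      have h1 := congrArg Prod.fst hval
      have h2 := congrArg Prod.snd hval
      dsimp only at h1 h2
      have hcpos : c ≠ 0 := by
        have := (hmemd hmem).1; intro h0; subst h0; exact hf (Nat.eq_zero_of_zero_dvd this)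
      have hgc : Finset.univ.gcd (fun i => (c:ℤ) * u.1 i) = (c:ℤ) := by
        rw [gcd_mul_nat, u.2.2, mul_one]
      have hge : Finset.univ.gcd (fun i => (e:ℤ) * s.1 i) = (e:ℤ) := by
        rw [gcd_mul_nat, s.2.2, mul_one]
      have hce : c = e := by
        have := hgc.symm.trans ((congrArg (Finset.univ.gcd) h1).trans hge)
        exact_mod_cast this
      have hgc' : Finset.univ.gcd (fun i => (c':ℤ) * v.1 i) = (c':ℤ) := by
        rw [gcd_mul_nat, v.2.2, mul_one]
      have hge' : Finset.univ.gcd (fun i => (e':ℤ) * t.1 i) = (e':ℤ) := by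
        rw [gcd_mul_nat, t.2.2, mul_one]
      have hce' : c' = e' := by
        have := hgc'.symm.trans ((congrArg (Finset.univ.gcd) h2).trans hge')
        exact_mod_cast this
      subst hce; subst hce'
      have hu : u = s := by
        apply Subtype.ext; funext i
        have := congrFun h1 i
        exact mul_left_cancel₀ (by exact_mod_cast hcpos) this
      have hc'pos : c' ≠ 0 := by
        have := (hmemd hmem).2.1; intro h0; subst h0; exact hf (Nat.eq_zero_of_zero_dvd this)
      have hv : v = t := by
        apply Subtype.ext; funext i
        have := congrFun h2 i
        exact mul_left_cancel₀ (by exact_mod_cast hc'pos) this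
      subst hu; subst hv
      congr 1
    · rintro ⟨⟨x, y⟩, hx, hy, hcop⟩
      dsimp only at hx hy hcop
      have hxne : Finset.univ.gcd x ≠ 0 := by
        intro h0
        have hall := Finset.gcd_eq_zero_iff.1 h0
        rw [hall 0 (Finset.mem_univ 0), hall 1 (Finset.mem_univ 1),
          hall 2 (Finset.mem_univ 2)] at hx
        norm_num at hx
        omega
      have hyne : Finset.univ.gcd y ≠ 0 := by
        intro h0
        have hall := Finset.gcd_eq_zero_iff.1 h0
        rw [hall 0 (Finset.mem_univ 0), hall 1 (Finset.mem_univ 1),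
          hall 2 (Finset.mem_univ 2)] at hy
        norm_num at hy
        omega
      obtain ⟨c, hcZc⟩ : ∃ c : ℕ, (c:ℤ) = Finset.univ.gcd x :=
        ⟨_, Int.natAbs_of_nonneg (finset_gcd_nonneg x)⟩
      obtain ⟨c', hc'Zc⟩ : ∃ c' : ℕ, (c':ℤ) = Finset.univ.gcd y :=
        ⟨_, Int.natAbs_of_nonneg (finset_gcd_nonneg y)⟩
      have hcne : c ≠ 0 := by rintro rfl; exact hxne (by rw [← hcZc]; norm_num)
      have hc'ne : c' ≠ 0 := by rintro rfl; exact hyne (by rw [← hc'Zc]; norm_num)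
      have hdvdx : ∀ i, (c:ℤ) ∣ x i := fun i => hcZc ▸ Finset.gcd_dvd (Finset.mem_univ i)
      have hdvdy : ∀ i, (c':ℤ) ∣ y i := fun i => hc'Zc ▸ Finset.gcd_dvd (Finset.mem_univ i)
      set u : Fin 3 → ℤ := fun i => x i / (c:ℤ) with hudef
      set v : Fin 3 → ℤ := fun i => y i / (c':ℤ) with hvdef
      have hxu : ∀ i, (c:ℤ) * u i = x i := fun i => Int.mul_ediv_cancel' (hdvdx i)
      have hyv : ∀ i, (c':ℤ) * v i = y i := fun i => Int.mul_ediv_cancel' (hdvdy i)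
      have hgu : Finset.univ.gcd u = 1 := by
        have h1 : Finset.univ.gcd (fun i => (c:ℤ) * u i) = (c:ℤ) * Finset.univ.gcd u :=
          gcd_mul_nat c u
        have h2 : (fun i => (c:ℤ) * u i) = x := funext hxu
        rw [h2, ← hcZc] at h1
        exact (mul_left_cancel₀ (show (c:ℤ) ≠ 0 by exact_mod_cast hcne)
          ((mul_one (c:ℤ)).trans h1)).symm
      have hgv : Finset.univ.gcd v = 1 := by
        have h1 : Finset.univ.gcd (fun i => (c':ℤ) * v i) = (c':ℤ) * Finset.univ.gcd v :=
          gcd_mul_nat c' v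
        have h2 : (fun i => (c':ℤ) * v i) = y := funext hyv
        rw [h2, ← hc'Zc] at h1
        exact (mul_left_cancel₀ (show (c':ℤ) ≠ 0 by exact_mod_cast hc'ne)
          ((mul_one (c':ℤ)).trans h1)).symm
      have hxsq : (c:ℤ)^2 * ((u 0)^2 + (u 1)^2 + (u 2)^2) = (d:ℤ) := by
        rw [← hxu 0, ← hxu 1, ← hxu 2] at hx
        linear_combination hx
      have hysq : (c':ℤ)^2 * ((v 0)^2 + (v 1)^2 + (v 2)^2) = (d:ℤ) := by
        rw [← hyv 0, ← hyv 1, ← hyv 2] at hy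
        linear_combination hy
      have hc2d : c^2 ∣ d := by
        have : ((c^2 : ℕ) : ℤ) ∣ (d:ℤ) := by push_cast; exact ⟨_, hxsq.symm⟩
        exact_mod_cast this
      have hc'2d : c'^2 ∣ d := by
        have : ((c'^2 : ℕ) : ℤ) ∣ (d:ℤ) := by push_cast; exact ⟨_, hysq.symm⟩
        exact_mod_cast this
      have hU : (u 0)^2 + (u 1)^2 + (u 2)^2 = ((d / c^2 : ℕ) : ℤ) := by
        have cast1 : ((d / c^2 : ℕ) : ℤ) * (c:ℤ)^2 = (d:ℤ) := by
          exact_mod_cast congrArg (fun t : ℕ => (t:ℤ)) (Nat.div_mul_cancel hc2d)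
        apply mul_left_cancel₀ (show ((c:ℤ))^2 ≠ 0 by positivity)
        rw [hxsq]; linarith [cast1]
      have hV : (v 0)^2 + (v 1)^2 + (v 2)^2 = ((d / c'^2 : ℕ) : ℤ) := by
        have cast2 : ((d / c'^2 : ℕ) : ℤ) * (c':ℤ)^2 = (d:ℤ) := by
          exact_mod_cast congrArg (fun t : ℕ => (t:ℤ)) (Nat.div_mul_cancel hc'2d)
        apply mul_left_cancel₀ (show ((c':ℤ))^2 ≠ 0 by positivity)
        rw [hysq]; linarith [cast2]
      have hcf : c ∣ f := dvd_of_sq_dvd_sqfree_mul_sq hsq hf (hfact ▸ hc2d)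
      have hc'f : c' ∣ f := dvd_of_sq_dvd_sqfree_mul_sq hsq hf (hfact ▸ hc'2d)
      have hgcd1 : Nat.gcd c c' = 1 := by
        have : Int.gcd (c:ℤ) (c':ℤ) = 1 := by rw [hcZc, hc'Zc]; exact hcop
        simpa using this
      have hmem : (c, c') ∈ idxSet f := by
        simp only [idxSet, Finset.mem_filter, Finset.mem_product, Nat.mem_divisors]
        exact ⟨⟨⟨hcf, hf⟩, ⟨hc'f, hf⟩⟩, hgcd1⟩
      refine ⟨⟨⟨(c, c'), hmem⟩, (⟨u, hU, hgu⟩, ⟨v, hV, hgv⟩)⟩, ?_⟩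
      apply Subtype.ext
      show ((fun i => (c:ℤ) * u i), (fun i => (c':ℤ) * v i)) = (x, y)
      exact Prod.ext (funext hxu) (funext hyv)
  -- now compute the cardinality of the sigma type
  haveI : ∀ (p : {p : ℕ × ℕ // p ∈ idxSet f}), Finite (R3 (d / p.1.1^2) × R3 (d / p.1.2^2)) := by
    intro p
    haveI h1 : Finite (R3 (d / p.1.1^2)) :=
      finite_sphere3 ((d / p.1.1^2 : ℕ) : ℤ) (fun v => Finset.univ.gcd v = 1)
    haveI h2 : Finite (R3 (d / p.1.2^2)) :=
      finite_sphere3 ((d / p.1.2^2 : ℕ) : ℤ) (fun v => Finset.univ.gcd v = 1)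
    exact Finite.instProd
  rw [main, nat_card_sigma]
  have : ∀ p : {p : ℕ × ℕ // p ∈ idxSet f},
      Nat.card (R3 (d / p.1.1^2) × R3 (d / p.1.2^2)) =
      r3prim (d / p.1.1^2) * r3prim (d / p.1.2^2) := by
    intro p
    rw [Nat.card_prod, r3prim_eq, r3prim_eq]
  calc ∑ p : {p : ℕ × ℕ // p ∈ idxSet f}, Nat.card (R3 (d / p.1.1^2) × R3 (d / p.1.2^2))
      = ∑ p : {p : ℕ × ℕ // p ∈ idxSet f}, r3prim (d / p.1.1^2) * r3prim (d / p.1.2^2) :=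
        Finset.sum_congr rfl (fun p _ => this p)
    _ = ∑ p ∈ idxSet f, r3prim (d / p.1^2) * r3prim (d / p.2^2) :=
        Finset.sum_coe_sort (idxSet f) (fun p => r3prim (d / p.1^2) * r3prim (d / p.2^2))

/-- for `d ≡ 3 (mod 4)`, `d = d₀f²` with `d₀` squarefree,
`r₂₄(d) = (1/2)·Σ_{c ∣ f} Σ_{c′ ∣ f, gcd(c,c′)=1} r₃,prim(d/c²)·r₃,prim(d/c′²)`. -/
theorem r24_eq_of_three_mod_four (d d₀ f : ℕ) (hd : 0 < d) (h3 : d % 4 = 3)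
    (hfact : d = d₀ * f ^ 2) (hsq : Squarefree d₀) :
    r24 d = (1 / 2 : ℚ) *
      ∑ c ∈ f.divisors, ∑ c' ∈ f.divisors.filter (fun c' => Nat.gcd c c' = 1),
        (r3prim (d / c ^ 2) : ℚ) * (r3prim (d / c' ^ 2) : ℚ) := by
  have h1 := card_S_eq_card_T d h3
  have h2 := card_T d d₀ f hd hfact hsq
  have hre : ∑ p ∈ idxSet f, r3prim (d / p.1^2) * r3prim (d / p.2^2)
      = ∑ c ∈ f.divisors, ∑ c' ∈ f.divisors.filter (fun c' => Nat.gcd c c' = 1),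
          r3prim (d / c^2) * r3prim (d / c'^2) := by
    simp only [idxSet, Finset.sum_filter, Finset.sum_product]
  rw [r24, h1, h2, hre]
  push_cast
  ring
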